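/- Energy bound for classical solutions: Let L, ρ, μ, T > 0, let G ∈ C^∞(ℝ) with G ≥ 0, and let u : [0,T]×[0,L] → ℝ be smooth (C² in t and C⁴ in x, with continuous mixed derivative ∂_t∂²ₓu) satisfying ρ∂²_t u = −μ∂⁴ₓu − G'(u) on [0,T]×(0,L) and the boundary conditions ∂²ₓu(t,0) = ∂²ₓu(t,L) = ∂³ₓu(t,0) = ∂³ₓu(t,L) = 0 for all t ∈ [0,T]. Then for every t ∈ [0,T], ∫₀^L (ρ(∂_t u(t,x))² + μ(∂²ₓu(t,x))²)/2 dx ≤ ∫₀^L ((ρ(∂_t u(0,x))² + μ(∂²ₓu(0,x))²)/2 + G(u(0,x))) dx. -/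

import Mathlib

open MeasureTheory Filter Set intervalIntegral Real


lemma eb_bound {T L : ℝ} (v : ℝ → ℝ → ℝ)
    (h : ContinuousOn (fun p : ℝ × ℝ => v p.1 p.2) (Icc 0 T ×ˢ Icc 0 L)) :
    ∃ M : ℝ, 0 ≤ M ∧ ∀ t ∈ Icc (0:ℝ) T, ∀ x ∈ Icc (0:ℝ) L, |v t x| ≤ M := by
  obtain ⟨C, hC⟩ := (isCompact_Icc.prod isCompact_Icc).exists_bound_of_continuousOn h
  refine ⟨max C 0, le_max_right _ _, fun t ht x hx => ?_⟩
  have h2 := hC (t, x) ⟨ht, hx⟩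
  exact le_trans (by simpa using h2) (le_max_left _ _)

lemma eb_ftc {a b : ℝ} (hab : a ≤ b) {f f' : ℝ → ℝ}
    (hf : ContinuousOn f (Icc a b)) (hd : ∀ x ∈ Ioo a b, HasDerivAt f (f' x) x)
    (hint : IntervalIntegrable f' volume a b) :
    ∫ x in a..b, f' x = f b - f a :=
  integral_eq_sub_of_hasDeriv_right_of_le hab hf
    (fun x hx => (hd x hx).hasDerivWithinAt) hint

lemma eb_primitive_hasDerivAt {L : ℝ} {f : ℝ → ℝ} (hf : ContinuousOn f (Icc 0 L))
    {x : ℝ} (hx : x ∈ Ioo 0 L) :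
    HasDerivAt (fun b => ∫ y in (0:ℝ)..b, f y) (f x) x := by
  have hsub : Icc (0:ℝ) x ⊆ Icc 0 L := Icc_subset_Icc le_rfl hx.2.le
  refine integral_hasDerivAt_right ((hf.mono hsub).intervalIntegrable_of_Icc hx.1.le) ?_ ?_
  · exact (hf.mono Ioo_subset_Icc_self).stronglyMeasurableAtFilter isOpen_Ioo x hx
  · exact (hf.mono Ioo_subset_Icc_self).continuousAt (Ioo_mem_nhds hx.1 hx.2)

lemma eb_param_cont {T L : ℝ} (hL : 0 < L) {f : ℝ → ℝ → ℝ}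
    (hf : ContinuousOn (fun p : ℝ × ℝ => f p.1 p.2) (Icc 0 T ×ˢ Icc 0 L)) :
    ContinuousOn (fun p : ℝ × ℝ => ∫ y in (0:ℝ)..p.2, f p.1 y)
      (Icc 0 T ×ˢ Icc 0 L) := by
  obtain ⟨M, hM0, hM⟩ := eb_bound f hf
  have huc : UniformContinuousOn (fun p : ℝ × ℝ => f p.1 p.2) (Icc 0 T ×ˢ Icc 0 L) :=
    (isCompact_Icc.prod isCompact_Icc).uniformContinuousOn_of_continuous hf
  rw [Metric.uniformContinuousOn_iff] at huc
  intro p hp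
  rw [Metric.continuousWithinAt_iff]
  intro ε hε
  obtain ⟨δ, hδ0, hδ⟩ := huc (ε / (2 * (L + 1))) (by positivity)
  refine ⟨min δ (ε / (2 * (M + 1))), by positivity, fun {q} hq hqd => ?_⟩
  obtain ⟨hq1, hq2⟩ := hq
  obtain ⟨hp1, hp2⟩ := hp
  have hint : ∀ t ∈ Icc (0:ℝ) T, ∀ a b : ℝ, a ∈ Icc (0:ℝ) L → b ∈ Icc (0:ℝ) L →
      IntervalIntegrable (f t) volume a b := by
    intro t ht a b ha hb
    apply ContinuousOn.intervalIntegrable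
    have hmap : MapsTo (fun y => ((t, y) : ℝ × ℝ)) (uIcc a b) (Icc 0 T ×ˢ Icc 0 L) := by
      intro y hy
      refine ⟨ht, ?_⟩
      rcases le_total a b with h | h
      · rw [uIcc_of_le h] at hy; exact ⟨le_trans ha.1 hy.1, le_trans hy.2 hb.2⟩
      · rw [uIcc_of_ge h] at hy; exact ⟨le_trans hb.1 hy.1, le_trans hy.2 ha.2⟩
    exact hf.comp ((continuous_const.prodMk continuous_id).continuousOn) hmap
  have h0L : (0:ℝ) ∈ Icc (0:ℝ) L := ⟨le_rfl, hL.le⟩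
  -- decompose
  have k1 : (∫ y in (0:ℝ)..q.2, f q.1 y) - (∫ y in (0:ℝ)..p.2, f q.1 y)
      = ∫ y in p.2..q.2, f q.1 y :=
    intervalIntegral.integral_interval_sub_left (hint _ hq1 _ _ h0L hq2) (hint _ hq1 _ _ h0L hp2)
  have k2 : (∫ y in (0:ℝ)..p.2, (f q.1 y - f p.1 y))
      = (∫ y in (0:ℝ)..p.2, f q.1 y) - (∫ y in (0:ℝ)..p.2, f p.1 y) :=
    intervalIntegral.integral_sub (hint _ hq1 _ _ h0L hp2) (hint _ hp1 _ _ h0L hp2)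
  have key : (∫ y in (0:ℝ)..q.2, f q.1 y) - (∫ y in (0:ℝ)..p.2, f p.1 y)
      = (∫ y in (0:ℝ)..p.2, (f q.1 y - f p.1 y)) + ∫ y in p.2..q.2, f q.1 y := by
    linarith [k1, k2]
  rw [dist_eq_norm, key]
  have hd1 : ‖∫ y in (0:ℝ)..p.2, (f q.1 y - f p.1 y)‖ ≤ (ε / (2 * (L + 1))) * |p.2 - 0| := by
    apply intervalIntegral.norm_integral_le_of_norm_le_const
    intro y hy
    have hy' : y ∈ Icc (0:ℝ) L := by
      rcases le_total (0:ℝ) p.2 with h | h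
      · rw [uIoc_of_le h] at hy
        exact ⟨hy.1.le, hy.2.trans hp2.2⟩
      · rw [uIoc_of_ge h] at hy
        exact ⟨le_trans hp2.1 hy.1.le, hy.2.trans hL.le⟩
    have hdd : dist (((q.1, y)) : ℝ × ℝ) ((p.1, y) : ℝ × ℝ) < δ := by
      have e1 : dist (((q.1, y)) : ℝ × ℝ) ((p.1, y) : ℝ × ℝ) = dist q.1 p.1 := by
        simp [Prod.dist_eq, dist_nonneg]
      have e2 : dist q.1 p.1 ≤ dist q p := by
        rw [Prod.dist_eq]; exact le_max_left _ _
      rw [e1]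
      exact lt_of_le_of_lt e2 (lt_of_lt_of_le hqd (min_le_left _ _))
    have := hδ (q.1, y) ⟨hq1, hy'⟩ (p.1, y) ⟨hp1, hy'⟩ hdd
    simpa [Real.dist_eq] using this.le
  have hd2 : ‖∫ y in p.2..q.2, f q.1 y‖ ≤ M * |q.2 - p.2| := by
    apply intervalIntegral.norm_integral_le_of_norm_le_const
    intro y hy
    have hy' : y ∈ Icc (0:ℝ) L := by
      rcases le_total p.2 q.2 with h | h
      · rw [uIoc_of_le h] at hy
        exact ⟨le_trans hp2.1 hy.1.le, hy.2.trans hq2.2⟩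
      · rw [uIoc_of_ge h] at hy
        exact ⟨le_trans hq2.1 hy.1.le, hy.2.trans hp2.2⟩
    simpa [Real.norm_eq_abs] using hM _ hq1 _ hy'
  have hq2p2 : |q.2 - p.2| < ε / (2 * (M + 1)) := by
    have h22 : dist q.2 p.2 ≤ dist q p := by
      rw [Prod.dist_eq]; exact le_max_right _ _
    calc |q.2 - p.2| = dist q.2 p.2 := by rw [Real.dist_eq]
      _ ≤ dist q p := h22
      _ < _ := lt_of_lt_of_le hqd (min_le_right _ _)
  have hp2abs : |p.2 - 0| ≤ L := by
    rw [sub_zero, abs_of_nonneg hp2.1]; exact hp2.2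
  calc ‖(∫ y in (0:ℝ)..p.2, (f q.1 y - f p.1 y)) + ∫ y in p.2..q.2, f q.1 y‖
      ≤ ‖∫ y in (0:ℝ)..p.2, (f q.1 y - f p.1 y)‖ + ‖∫ y in p.2..q.2, f q.1 y‖ := norm_add_le _ _
    _ ≤ (ε / (2 * (L + 1))) * |p.2 - 0| + M * |q.2 - p.2| := add_le_add hd1 hd2
    _ < ε / 2 + ε / 2 := by
        apply add_lt_add_of_le_of_lt
        · calc (ε / (2 * (L + 1))) * |p.2 - 0| ≤ (ε / (2 * (L + 1))) * (L+1) := by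
                apply mul_le_mul_of_nonneg_left (by linarith) (by positivity)
            _ = ε / 2 := by field_simp
        · calc M * |q.2 - p.2| ≤ (M+1) * |q.2 - p.2| := by
                apply mul_le_mul_of_nonneg_right (by linarith) (abs_nonneg _)
            _ < (M+1) * (ε / (2 * (M + 1))) := by
                apply mul_lt_mul_of_pos_left hq2p2 (by linarith)
            _ = ε / 2 := by field_simp
    _ = ε := by ring

lemma eb_param_deriv {T L : ℝ} {f f' : ℝ → ℝ → ℝ} {t : ℝ} (ht : t ∈ Ioo 0 T)
    (hcf : ∀ τ ∈ Icc (0:ℝ) T, ContinuousOn (f τ) (Icc 0 L))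
    (hcf' : ContinuousOn (f' t) (Icc 0 L))
    {C : ℝ} (hbound : ∀ τ ∈ Icc (0:ℝ) T, ∀ y ∈ Icc (0:ℝ) L, |f' τ y| ≤ C)
    (hderiv : ∀ y ∈ Icc (0:ℝ) L, ∀ τ ∈ Icc (0:ℝ) T, HasDerivAt (fun σ => f σ y) (f' τ y) τ)
    {b : ℝ} (hb : b ∈ Icc (0:ℝ) L) :
    HasDerivAt (fun τ => ∫ y in (0:ℝ)..b, f τ y) (∫ y in (0:ℝ)..b, f' t y) t := by
  have hε : (0:ℝ) < min t (T - t) := lt_min ht.1 (by linarith [ht.2])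
  have hball : Metric.ball t (min t (T - t)) ⊆ Icc 0 T := by
    intro τ hτ
    rw [Metric.mem_ball, Real.dist_eq, abs_lt] at hτ
    constructor
    · nlinarith [min_le_left t (T - t), hτ.1]
    · nlinarith [min_le_right t (T - t), hτ.2]
  have hIsub : Set.uIoc (0:ℝ) b ⊆ Icc 0 L := by
    rw [uIoc_of_le hb.1]
    exact fun y hy => ⟨hy.1.le, hy.2.trans hb.2⟩
  have htT : t ∈ Icc (0:ℝ) T := ⟨ht.1.le, ht.2.le⟩
  have key := intervalIntegral.hasDerivAt_integral_of_dominated_loc_of_deriv_le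
    (F := f) (F' := f') (x₀ := t) (a := 0) (b := b) (μ := volume)
    (bound := fun _ => C) (Metric.ball_mem_nhds t hε) ?_ ?_ ?_ ?_ ?_ ?_
  · exact key.2
  · filter_upwards [Metric.ball_mem_nhds t hε] with τ hτ
    exact ((hcf τ (hball hτ)).mono hIsub).aestronglyMeasurable measurableSet_uIoc
  · exact ((hcf t htT).mono (by
      rw [uIcc_of_le hb.1]; exact Icc_subset_Icc le_rfl hb.2)).intervalIntegrable
  · exact (hcf'.mono hIsub).aestronglyMeasurable measurableSet_uIoc
  · filter_upwards with y hy τ hτ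
    simpa [Real.norm_eq_abs] using hbound τ (hball hτ) y (hIsub hy)
  · exact intervalIntegrable_const
  · filter_upwards with y hy τ hτ
    exact hderiv y (hIsub hy) τ (hball hτ)

/-- **Energy bound for classical solutions.**
Let `L, ρ, μ, T > 0`, `G` a smooth potential, and `u : [0,T] × [0,L] → ℝ` a classical
solution (`C²` in `t`, `C⁴` in `x`, with continuous mixed derivative `∂ₜ∂ₓ²u`) of the beam
equation `ρ ∂ₜ²u = -μ ∂ₓ⁴u - G'(u)` with free-end boundary conditions
`∂ₓ²u = ∂ₓ³u = 0` at `x = 0, L`.  Then the energy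
`∫₀ᴸ (ρ (∂ₜu(t))² + μ (∂ₓ²u(t))²)/2 dx` is bounded by the initial total energy, for every
`t ∈ [0,T]` (here `G ≥ 0`). -/
theorem energy_bound
    (L ρ μ T : ℝ) (hL : 0 < L) (hρ : 0 < ρ) (hμ : 0 < μ) (hT : 0 < T)
    (G : ℝ → ℝ) (hG : ContDiff ℝ (⊤ : ℕ∞) G) (hGnonneg : ∀ s, 0 ≤ G s)
    (u ut utt ux uxx uxxx uxxxx utxx : ℝ → ℝ → ℝ)
    -- time derivatives
    (hut : ∀ x ∈ Icc 0 L, ∀ t ∈ Icc 0 T, HasDerivAt (fun τ => u τ x) (ut t x) t)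
    (hutt : ∀ x ∈ Icc 0 L, ∀ t ∈ Icc 0 T, HasDerivAt (fun τ => ut τ x) (utt t x) t)
    -- space derivatives
    (hux : ∀ t ∈ Icc 0 T, ∀ x ∈ Icc 0 L, HasDerivAt (fun y => u t y) (ux t x) x)
    (huxx : ∀ t ∈ Icc 0 T, ∀ x ∈ Icc 0 L, HasDerivAt (fun y => ux t y) (uxx t x) x)
    (huxxx : ∀ t ∈ Icc 0 T, ∀ x ∈ Icc 0 L, HasDerivAt (fun y => uxx t y) (uxxx t x) x)
    (huxxxx : ∀ t ∈ Icc 0 T, ∀ x ∈ Icc 0 L, HasDerivAt (fun y => uxxx t y) (uxxxx t x) x)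
    -- mixed derivative ∂ₜ∂ₓ²u
    (hutxx : ∀ x ∈ Icc 0 L, ∀ t ∈ Icc 0 T, HasDerivAt (fun τ => uxx τ x) (utxx t x) t)
    -- continuity of the derivatives on [0,T] × [0,L]
    (hcont : ∀ v ∈ ({ut, utt, ux, uxx, uxxx, uxxxx, utxx} : Set (ℝ → ℝ → ℝ)),
      ContinuousOn (fun p : ℝ × ℝ => v p.1 p.2) (Icc 0 T ×ˢ Icc 0 L))
    -- the PDE ρ ∂ₜ²u = -μ ∂ₓ⁴u - G'(u) on [0,T] × (0,L)
    (hPDE : ∀ t ∈ Icc 0 T, ∀ x ∈ Ioo 0 L,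
      ρ * utt t x = -μ * uxxxx t x - deriv G (u t x))
    -- free-end boundary conditions
    (hBC : ∀ t ∈ Icc 0 T,
      uxx t 0 = 0 ∧ uxx t L = 0 ∧ uxxx t 0 = 0 ∧ uxxx t L = 0) :
    ∀ t ∈ Icc 0 T,
      (∫ x in (0:ℝ)..L, (ρ * (ut t x) ^ 2 + μ * (uxx t x) ^ 2) / 2)
        ≤ ∫ x in (0:ℝ)..L, ((ρ * (ut 0 x) ^ 2 + μ * (uxx 0 x) ^ 2) / 2 + G (u 0 x)) := by
  -- individual joint continuity facts
  have hcut : ContinuousOn (fun p : ℝ × ℝ => ut p.1 p.2) (Icc 0 T ×ˢ Icc 0 L) :=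
    hcont ut (by simp)
  have hcutt : ContinuousOn (fun p : ℝ × ℝ => utt p.1 p.2) (Icc 0 T ×ˢ Icc 0 L) :=
    hcont utt (by simp)
  have hcux : ContinuousOn (fun p : ℝ × ℝ => ux p.1 p.2) (Icc 0 T ×ˢ Icc 0 L) :=
    hcont ux (by simp)
  have hcuxx : ContinuousOn (fun p : ℝ × ℝ => uxx p.1 p.2) (Icc 0 T ×ˢ Icc 0 L) :=
    hcont uxx (by simp)
  have hcuxxx : ContinuousOn (fun p : ℝ × ℝ => uxxx p.1 p.2) (Icc 0 T ×ˢ Icc 0 L) :=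
    hcont uxxx (by simp)
  have hcuxxxx : ContinuousOn (fun p : ℝ × ℝ => uxxxx p.1 p.2) (Icc 0 T ×ˢ Icc 0 L) :=
    hcont uxxxx (by simp)
  have hcutxx : ContinuousOn (fun p : ℝ × ℝ => utxx p.1 p.2) (Icc 0 T ×ˢ Icc 0 L) :=
    hcont utxx (by simp)
  -- slices
  have slice : ∀ v : ℝ → ℝ → ℝ,
      ContinuousOn (fun p : ℝ × ℝ => v p.1 p.2) (Icc 0 T ×ˢ Icc 0 L) →
      ∀ τ ∈ Icc (0:ℝ) T, ContinuousOn (v τ) (Icc 0 L) := by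
    intro v hv τ hτ
    exact hv.comp ((continuous_const.prodMk continuous_id).continuousOn)
      (fun y hy => ⟨hτ, hy⟩)
  have h0L : (0:ℝ) ∈ Icc (0:ℝ) L := ⟨le_rfl, hL.le⟩
  have hLL : L ∈ Icc (0:ℝ) L := ⟨hL.le, le_rfl⟩
  have h0T : (0:ℝ) ∈ Icc (0:ℝ) T := ⟨le_rfl, hT.le⟩
  -- continuity of u in each variable and jointly
  have hu_x : ∀ τ ∈ Icc (0:ℝ) T, ContinuousOn (u τ) (Icc 0 L) := fun τ hτ y hy =>
    ((hux τ hτ y hy).continuousAt).continuousWithinAt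
  have hu_t : ∀ x ∈ Icc (0:ℝ) L, ContinuousOn (fun τ => u τ x) (Icc 0 T) := fun x hx τ hτ =>
    ((hut x hx τ hτ).continuousAt).continuousWithinAt
  have hurep : ∀ τ ∈ Icc (0:ℝ) T, ∀ x ∈ Icc (0:ℝ) L,
      u τ x = u τ 0 + ∫ y in (0:ℝ)..x, ux τ y := by
    intro τ hτ x hx
    have hsub : Icc (0:ℝ) x ⊆ Icc 0 L := Icc_subset_Icc le_rfl hx.2
    have := eb_ftc hx.1 ((hu_x τ hτ).mono hsub)
      (fun y hy => hux τ hτ y ⟨hy.1.le, hy.2.le.trans hx.2⟩)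
      (((slice ux hcux τ hτ).mono (by rw [uIcc_of_le hx.1]; exact hsub)).intervalIntegrable)
    linarith [this]
  have hu_joint : ContinuousOn (fun p : ℝ × ℝ => u p.1 p.2) (Icc 0 T ×ˢ Icc 0 L) := by
    have h1 : ContinuousOn (fun p : ℝ × ℝ => u p.1 0 + ∫ y in (0:ℝ)..p.2, ux p.1 y)
        (Icc 0 T ×ˢ Icc 0 L) := by
      refine ContinuousOn.add ?_ (eb_param_cont hL hcux)
      exact (hu_t 0 h0L).comp continuous_fst.continuousOn (fun p hp => hp.1)
    exact h1.congr (fun p hp => hurep p.1 hp.1 p.2 hp.2)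
  -- bounds
  obtain ⟨Mut, hMut0, hMut⟩ := eb_bound ut hcut
  obtain ⟨Mutt, hMutt0, hMutt⟩ := eb_bound utt hcutt
  obtain ⟨Muxx, hMuxx0, hMuxx⟩ := eb_bound uxx hcuxx
  obtain ⟨Mutxx, hMutxx0, hMutxx⟩ := eb_bound utxx hcutxx
  obtain ⟨Mu, hMu0, hMu⟩ := eb_bound u hu_joint
  have hG' : Continuous (deriv G) := hG.continuous_deriv (by simp)
  obtain ⟨C0, hC0⟩ := (isCompact_Icc (a := -Mu) (b := Mu)).exists_bound_of_continuousOn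
    hG'.continuousOn
  set MG : ℝ := max C0 0 with hMGdef
  have hMG0 : 0 ≤ MG := le_max_right _ _
  have hMG : ∀ τ ∈ Icc (0:ℝ) T, ∀ x ∈ Icc (0:ℝ) L, |deriv G (u τ x)| ≤ MG := by
    intro τ hτ x hx
    have hu : u τ x ∈ Icc (-Mu) Mu := by
      have := hMu τ hτ x hx
      constructor <;> [linarith [neg_abs_le (u τ x)]; linarith [le_abs_self (u τ x)]]
    exact le_trans (by simpa using hC0 _ hu) (le_max_left _ _)
  -- the energy function
  set E : ℝ → ℝ := fun τ => ∫ x in (0:ℝ)..L,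
    ((ρ * ut τ x ^ 2 + μ * uxx τ x ^ 2) / 2 + G (u τ x)) with hEdef
  -- joint continuity of the energy density
  have he_joint : ContinuousOn (fun p : ℝ × ℝ =>
      (ρ * ut p.1 p.2 ^ 2 + μ * uxx p.1 p.2 ^ 2) / 2 + G (u p.1 p.2))
      (Icc 0 T ×ˢ Icc 0 L) := by
    exact (((continuousOn_const.mul (hcut.pow 2)).add
      (continuousOn_const.mul (hcuxx.pow 2))).div_const 2).add
      (hG.continuous.comp_continuousOn hu_joint)
  have hE_cont : ContinuousOn E (Icc 0 T) := by
    have := (eb_param_cont hL (f := fun τ x =>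
        (ρ * ut τ x ^ 2 + μ * uxx τ x ^ 2) / 2 + G (u τ x)) he_joint).comp
      ((continuous_id.prodMk continuous_const).continuousOn (s := Icc (0:ℝ) T))
      (fun τ hτ => ⟨hτ, hLL⟩)
    exact this
  have hTaylor : ∀ τ ∈ Icc (0:ℝ) T, ∀ x ∈ Icc (0:ℝ) L,
      (∫ y in (0:ℝ)..x, (x - y) * uxx τ y) = u τ x - u τ 0 - x * ux τ 0 := by
    intro τ hτ x hx
    have hsub : Icc (0:ℝ) x ⊆ Icc 0 L := Icc_subset_Icc le_rfl hx.2
    have hsub' : uIcc (0:ℝ) x ⊆ Icc 0 L := by rw [uIcc_of_le hx.1]; exact hsub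
    have hF : ∀ y ∈ Ioo (0:ℝ) x, HasDerivAt (fun y => (x - y) * ux τ y + u τ y)
        ((x - y) * uxx τ y) y := by
      intro y hy
      have hyL : y ∈ Icc (0:ℝ) L := hsub ⟨hy.1.le, hy.2.le⟩
      have hA : HasDerivAt (fun y => (x:ℝ) - y) (-1) y := (hasDerivAt_id y).const_sub x
      have hcomb := (hA.mul (huxx τ hτ y hyL)).add (hux τ hτ y hyL)
      exact hcomb.congr_deriv (by ring)
    have hFc : ContinuousOn (fun y => (x - y) * ux τ y + u τ y) (Icc 0 x) :=
      (((continuous_const.sub continuous_id).continuousOn).mul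
        ((slice ux hcux τ hτ).mono hsub)).add ((hu_x τ hτ).mono hsub)
    have hInt : IntervalIntegrable (fun y => (x - y) * uxx τ y) volume 0 x :=
      (((continuous_const.sub continuous_id).continuousOn).mul
        ((slice uxx hcuxx τ hτ).mono hsub')).intervalIntegrable
    have hval := eb_ftc hx.1 hFc hF hInt
    rw [hval]; ring
  have hE_deriv : ∀ t ∈ Ioo (0:ℝ) T, HasDerivAt E 0 t := by
    intro t ht
    have htT : t ∈ Icc (0:ℝ) T := ⟨ht.1.le, ht.2.le⟩
    -- Step 1: differentiate under the integral sign
    have hstep1 : HasDerivAt E (∫ x in (0:ℝ)..L,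
        (ρ * ut t x * utt t x + μ * uxx t x * utxx t x + deriv G (u t x) * ut t x)) t := by
      rw [hEdef]
      apply eb_param_deriv
        (f := fun τ x => (ρ * ut τ x ^ 2 + μ * uxx τ x ^ 2) / 2 + G (u τ x))
        (f' := fun τ x => ρ * ut τ x * utt τ x + μ * uxx τ x * utxx τ x
          + deriv G (u τ x) * ut τ x)
        (C := ρ * (Mut * Mutt) + μ * (Muxx * Mutxx) + MG * Mut)
        ht ?_ ?_ ?_ ?_ hLL
      · intro τ hτ
        exact (((continuousOn_const.mul ((slice ut hcut τ hτ).pow 2)).add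
          (continuousOn_const.mul ((slice uxx hcuxx τ hτ).pow 2))).div_const 2).add
          (hG.continuous.comp_continuousOn (hu_x τ hτ))
      · exact (((continuousOn_const.mul (slice ut hcut t htT)).mul
          (slice utt hcutt t htT)).add ((continuousOn_const.mul
          (slice uxx hcuxx t htT)).mul (slice utxx hcutxx t htT))).add
          ((hG'.comp_continuousOn (hu_x t htT)).mul (slice ut hcut t htT))
      · intro τ hτ y hy
        have b1 := hMut τ hτ y hy
        have b2 := hMutt τ hτ y hy
        have b3 := hMuxx τ hτ y hy
        have b4 := hMutxx τ hτ y hy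
        have b5 := hMG τ hτ y hy
        calc |ρ * ut τ y * utt τ y + μ * uxx τ y * utxx τ y + deriv G (u τ y) * ut τ y|
            ≤ |ρ * ut τ y * utt τ y + μ * uxx τ y * utxx τ y|
              + |deriv G (u τ y) * ut τ y| := abs_add_le _ _
          _ ≤ |ρ * ut τ y * utt τ y| + |μ * uxx τ y * utxx τ y|
              + |deriv G (u τ y) * ut τ y| := add_le_add_left (abs_add_le _ _) _
          _ = ρ * (|ut τ y| * |utt τ y|) + μ * (|uxx τ y| * |utxx τ y|)
              + |deriv G (u τ y)| * |ut τ y| := by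
              rw [abs_mul, abs_mul, abs_mul, abs_mul, abs_mul,
                abs_of_pos hρ, abs_of_pos hμ]; ring
          _ ≤ ρ * (Mut * Mutt) + μ * (Muxx * Mutxx) + MG * Mut := by
              gcongr
      · intro y hy τ hτ
        have d1 := hut y hy τ hτ
        have d2 := hutt y hy τ hτ
        have d3 := hutxx y hy τ hτ
        have dG : HasDerivAt G (deriv G (u τ y)) (u τ y) :=
          ((hG.differentiable (by simp)) (u τ y)).hasDerivAt
        have hcomp := dG.comp τ d1
        have h2 := ((((d2.pow 2).const_mul ρ).add ((d3.pow 2).const_mul μ)).div_const 2).add hcomp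
        refine h2.congr_deriv ?_
        push_cast
        ring
    -- Step 2: use the PDE
    have hstep2 : (∫ x in (0:ℝ)..L, (ρ * ut t x * utt t x + μ * uxx t x * utxx t x
        + deriv G (u t x) * ut t x))
        = ∫ x in (0:ℝ)..L, μ * (uxx t x * utxx t x - ut t x * uxxxx t x) := by
      apply intervalIntegral.integral_congr_ae
      have hLne : ∀ᵐ x : ℝ, x ≠ L := by
        rw [ae_iff]
        have hset : {x : ℝ | ¬ x ≠ L} = {L} := by ext z; simp
        rw [hset]
        exact measure_singleton L
      filter_upwards [hLne] with x hxne hxI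
      rw [uIoc_of_le hL.le] at hxI
      have hxIoo : x ∈ Ioo (0:ℝ) L := ⟨hxI.1, lt_of_le_of_ne hxI.2 hxne⟩
      have hp := hPDE t htT x hxIoo
      linear_combination ut t x * hp
    -- Step 3: the mixed derivative utx and integration by parts
    have hRderiv : ∀ x ∈ Icc (0:ℝ) L, HasDerivAt
        (fun τ => ∫ y in (0:ℝ)..x, (x - y) * uxx τ y)
        (∫ y in (0:ℝ)..x, (x - y) * utxx t y) t := by
      intro x hx
      apply eb_param_deriv (f := fun τ y => (x - y) * uxx τ y)
        (f' := fun τ y => (x - y) * utxx τ y)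
        (C := L * Mutxx) ht ?_ ?_ ?_ ?_ hx
      · intro τ hτ
        exact ((continuous_const.sub continuous_id).continuousOn).mul (slice uxx hcuxx τ hτ)
      · exact ((continuous_const.sub continuous_id).continuousOn).mul (slice utxx hcutxx t htT)
      · intro τ hτ y hy
        rw [abs_mul]
        have h1 : |x - y| ≤ L := abs_le.2 ⟨by linarith [hx.1, hx.2, hy.1, hy.2],
          by linarith [hx.1, hx.2, hy.1, hy.2]⟩
        exact mul_le_mul h1 (hMutxx τ hτ y hy) (abs_nonneg _) hL.le
      · intro y hy τ hτ
        exact (hutxx y hy τ hτ).const_mul (x - y)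
    -- cross identity for ut
    have hcross : ∀ x ∈ Icc (0:ℝ) L,
        L * (ut t x - ut t 0 - ∫ y in (0:ℝ)..x, (x - y) * utxx t y)
          = x * (ut t L - ut t 0 - ∫ y in (0:ℝ)..L, (L - y) * utxx t y) := by
      intro x hx
      have hΦ0 : ∀ τ ∈ Icc (0:ℝ) T,
          L * (u τ x - u τ 0 - ∫ y in (0:ℝ)..x, (x - y) * uxx τ y)
            - x * (u τ L - u τ 0 - ∫ y in (0:ℝ)..L, (L - y) * uxx τ y) = 0 := by
        intro τ hτ
        have h1 := hTaylor τ hτ x hx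
        have h2 := hTaylor τ hτ L hLL
        rw [h1, h2]; ring
      have hΦd : HasDerivAt (fun τ =>
          L * (u τ x - u τ 0 - ∫ y in (0:ℝ)..x, (x - y) * uxx τ y)
            - x * (u τ L - u τ 0 - ∫ y in (0:ℝ)..L, (L - y) * uxx τ y))
          (L * (ut t x - ut t 0 - ∫ y in (0:ℝ)..x, (x - y) * utxx t y)
            - x * (ut t L - ut t 0 - ∫ y in (0:ℝ)..L, (L - y) * utxx t y)) t :=
        ((((hut x hx t htT).sub (hut 0 h0L t htT)).sub (hRderiv x hx)).const_mul L).sub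
          ((((hut L hLL t htT).sub (hut 0 h0L t htT)).sub (hRderiv L hLL)).const_mul x)
      have hΦz : HasDerivAt (fun τ =>
          L * (u τ x - u τ 0 - ∫ y in (0:ℝ)..x, (x - y) * uxx τ y)
            - x * (u τ L - u τ 0 - ∫ y in (0:ℝ)..L, (L - y) * uxx τ y)) 0 t := by
        have hmem : Icc (0:ℝ) T ∈ nhds t := Icc_mem_nhds ht.1 ht.2
        exact (hasDerivAt_const t 0).congr_of_eventuallyEq
          (eventually_of_mem hmem (fun τ hτ => hΦ0 τ hτ))
      have := hΦd.unique hΦz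
      linarith [this]
    -- the spatial derivative of x ↦ ut t x
    set c1 : ℝ := (ut t L - ut t 0 - ∫ y in (0:ℝ)..L, (L - y) * utxx t y) / L with hc1def
    set P : ℝ → ℝ := fun x => ∫ y in (0:ℝ)..x, utxx t y with hPdef
    have hcutxxt : ContinuousOn (utxx t) (Icc 0 L) := slice utxx hcutxx t htT
    have hutform : ∀ x ∈ Icc (0:ℝ) L,
        ut t x = ut t 0 + x * c1 + ∫ y in (0:ℝ)..x, (x - y) * utxx t y := by
      intro x hx
      have hc := hcross x hx
      rw [hc1def]
      field_simp
      linarith [hc]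
    have hPd : ∀ x ∈ Ioo (0:ℝ) L, HasDerivAt P (utxx t x) x := fun x hx =>
      eb_primitive_hasDerivAt hcutxxt hx
    have hPcont : ContinuousOn P (Icc 0 L) := by
      have hj : ContinuousOn (fun p : ℝ × ℝ => utxx t p.2) (Icc 0 T ×ˢ Icc 0 L) :=
        hcutxxt.comp continuous_snd.continuousOn (fun p hp => hp.2)
      have := (eb_param_cont hL (f := fun _ y => utxx t y) hj).comp
        ((continuous_const.prodMk continuous_id).continuousOn (s := Icc (0:ℝ) L))
        (fun x hx => ⟨h0T, hx⟩)
      exact this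
    have hRtform : ∀ x ∈ Icc (0:ℝ) L,
        (∫ y in (0:ℝ)..x, (x - y) * utxx t y)
          = x * P x - ∫ y in (0:ℝ)..x, y * utxx t y := by
      intro x hx
      have hsub' : uIcc (0:ℝ) x ⊆ Icc 0 L := by
        rw [uIcc_of_le hx.1]; exact Icc_subset_Icc le_rfl hx.2
      have hi1 : IntervalIntegrable (fun y => x * utxx t y) volume 0 x :=
        (continuousOn_const.mul (hcutxxt.mono hsub')).intervalIntegrable
      have hi2 : IntervalIntegrable (fun y => y * utxx t y) volume 0 x :=
        (continuous_id.continuousOn.mul (hcutxxt.mono hsub')).intervalIntegrable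
      calc (∫ y in (0:ℝ)..x, (x - y) * utxx t y)
          = ∫ y in (0:ℝ)..x, (x * utxx t y - y * utxx t y) :=
            intervalIntegral.integral_congr (fun y _ => by ring)
        _ = (∫ y in (0:ℝ)..x, x * utxx t y) - ∫ y in (0:ℝ)..x, y * utxx t y :=
            intervalIntegral.integral_sub hi1 hi2
        _ = x * P x - ∫ y in (0:ℝ)..x, y * utxx t y := by
            rw [hPdef, intervalIntegral.integral_const_mul]
    have hutd : ∀ x ∈ Ioo (0:ℝ) L, HasDerivAt (fun y => ut t y) (c1 + P x) x := by
      intro x hx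
      have hQd : HasDerivAt (fun y => ∫ z in (0:ℝ)..y, z * utxx t z) (x * utxx t x) x :=
        eb_primitive_hasDerivAt (continuous_id.continuousOn.mul hcutxxt) hx
      have hRtd : HasDerivAt (fun y => ∫ z in (0:ℝ)..y, (y - z) * utxx t z) (P x) x := by
        have h1 : HasDerivAt (fun y => y * P y - ∫ z in (0:ℝ)..y, z * utxx t z)
            (1 * P x + x * utxx t x - x * utxx t x) x :=
          ((hasDerivAt_id x).mul (hPd x hx)).sub hQd
        have heq : (fun y => ∫ z in (0:ℝ)..y, (y - z) * utxx t z)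
            =ᶠ[nhds x] (fun y => y * P y - ∫ z in (0:ℝ)..y, z * utxx t z) :=
          eventually_of_mem (Icc_mem_nhds hx.1 hx.2) (fun y hy => hRtform y hy)
        have h2 := h1.congr_of_eventuallyEq heq
        exact h2.congr_deriv (by ring)
      have heq2 : (fun y => ut t y) =ᶠ[nhds x]
          (fun y => ut t 0 + y * c1 + ∫ z in (0:ℝ)..y, (y - z) * utxx t z) :=
        eventually_of_mem (Icc_mem_nhds hx.1 hx.2) (fun y hy => hutform y hy)
      have h2 : HasDerivAt (fun y => ut t 0 + y * c1 + ∫ z in (0:ℝ)..y, (y - z) * utxx t z)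
          (c1 + P x) x := by
        have h3 := ((hasDerivAt_const x (ut t 0)).add ((hasDerivAt_id x).mul_const c1)).add hRtd
        exact h3.congr_deriv (by ring)
      exact h2.congr_of_eventuallyEq heq2
    -- integration by parts
    have hIBP : (∫ x in (0:ℝ)..L, μ * (uxx t x * utxx t x - ut t x * uxxxx t x)) = 0 := by
      have hHc : ContinuousOn (fun x => μ * ((c1 + P x) * uxx t x - ut t x * uxxx t x))
          (Icc 0 L) :=
        continuousOn_const.mul (((continuousOn_const.add hPcont).mul
          (slice uxx hcuxx t htT)).sub ((slice ut hcut t htT).mul (slice uxxx hcuxxx t htT)))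
      have hHd : ∀ x ∈ Ioo (0:ℝ) L, HasDerivAt
          (fun x => μ * ((c1 + P x) * uxx t x - ut t x * uxxx t x))
          (μ * (uxx t x * utxx t x - ut t x * uxxxx t x)) x := by
        intro x hx
        have hxL : x ∈ Icc (0:ℝ) L := ⟨hx.1.le, hx.2.le⟩
        have h1 : HasDerivAt (fun y => c1 + P y) (0 + utxx t x) x :=
          (hasDerivAt_const x c1).add (hPd x hx)
        have h2 := h1.mul (huxxx t htT x hxL)
        have h3 := (hutd x hx).mul (huxxxx t htT x hxL)
        have h4 := (h2.sub h3).const_mul μ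
        exact h4.congr_deriv (by ring)
      have hHint : IntervalIntegrable (fun x => μ * (uxx t x * utxx t x - ut t x * uxxxx t x))
          volume 0 L := by
        apply ContinuousOn.intervalIntegrable
        apply ContinuousOn.mono ?_ (by rw [uIcc_of_le hL.le] : uIcc (0:ℝ) L ⊆ Icc 0 L)
        exact continuousOn_const.mul (((slice uxx hcuxx t htT).mul hcutxxt).sub
          ((slice ut hcut t htT).mul (slice uxxxx hcuxxxx t htT)))
      have hftc := eb_ftc hL.le hHc hHd hHint
      rw [hftc]
      obtain ⟨b1, b2, b3, b4⟩ := hBC t htT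
      rw [b1, b2, b3, b4]
      ring
    have h0 : (∫ x in (0:ℝ)..L, (ρ * ut t x * utt t x + μ * uxx t x * utxx t x
        + deriv G (u t x) * ut t x)) = 0 := by rw [hstep2, hIBP]
    rw [h0] at hstep1
    exact hstep1
  
  have hE_const : ∀ t ∈ Icc (0:ℝ) T, E t = E 0 := by
    have hseg : ∀ a t : ℝ, 0 < a → a ≤ t → t ≤ T → E t = E a := by
      intro a t ha hat htT'
      have hc : ContinuousOn E (Icc a t) := hE_cont.mono (Icc_subset_Icc ha.le htT')
      have hd : ∀ x ∈ Ico a t, HasDerivWithinAt E 0 (Ici x) x := fun x hx =>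
        (hE_deriv x ⟨lt_of_lt_of_le ha hx.1, lt_of_lt_of_le hx.2 htT'⟩).hasDerivWithinAt
      exact constant_of_has_deriv_right_zero hc hd t ⟨hat, le_rfl⟩
    intro t ht
    rcases eq_or_lt_of_le ht.1 with h0 | h0
    · rw [← h0]
    · haveI hne : (nhdsWithin (0:ℝ) (Ioc (0:ℝ) t)).NeBot := by
        refine mem_closure_iff_nhdsWithin_neBot.1 ?_
        rw [closure_Ioc h0.ne]
        exact ⟨le_rfl, h0.le⟩
      have h1 : Tendsto E (nhdsWithin (0:ℝ) (Ioc (0:ℝ) t)) (nhds (E 0)) :=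
        (hE_cont 0 h0T).mono_left (nhdsWithin_mono 0
          (fun a (ha : a ∈ Ioc (0:ℝ) t) => ⟨ha.1.le, ha.2.trans ht.2⟩))
      have h2 : Tendsto E (nhdsWithin (0:ℝ) (Ioc (0:ℝ) t)) (nhds (E t)) := by
        apply Tendsto.congr' ?_ tendsto_const_nhds
        filter_upwards [self_mem_nhdsWithin] with a ha
        exact hseg a t ha.1 ha.2 ht.2
      exact tendsto_nhds_unique h2 h1
  intro t ht
  have h1 : (∫ x in (0:ℝ)..L, (ρ * (ut t x) ^ 2 + μ * (uxx t x) ^ 2) / 2) ≤ E t := by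
    rw [hEdef]
    apply intervalIntegral.integral_mono_on hL.le
    · exact ((((continuousOn_const.mul ((slice ut hcut t ht).pow 2)).add
        (continuousOn_const.mul ((slice uxx hcuxx t ht).pow 2))).div_const 2).mono
        (by rw [uIcc_of_le hL.le])).intervalIntegrable
    · exact (((((continuousOn_const.mul ((slice ut hcut t ht).pow 2)).add
        (continuousOn_const.mul ((slice uxx hcuxx t ht).pow 2))).div_const 2).add
        (hG.continuous.comp_continuousOn (hu_x t ht))).mono
        (by rw [uIcc_of_le hL.le])).intervalIntegrable
    · intro x hx
      have := hGnonneg (u t x)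
      linarith
  calc (∫ x in (0:ℝ)..L, (ρ * (ut t x) ^ 2 + μ * (uxx t x) ^ 2) / 2)
      ≤ E t := h1
    _ = E 0 := hE_const t ht
    _ = _ := by rw [hEdef]
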